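/- arXiv:2208.08125 — 2 statements merged into one kernel-verified Lean document; each statement's English description precedes it below -/
import Mathlib

section
/- BFV multiplication expansion identity: let q > t ≥ 2 be integers, Δ = ⌊q/t⌋ and r_t(q) = q − t·Δ, and work in ℚ[x]/(xⁿ+1). Suppose F₁, F₂, m₁, m₂, e₁', e₂', r_{q,1}, r_{q,2}, r_t, r_Δ are elements of ℤ[x]/(xⁿ+1) with F_i = Δ·m_i + e_i' + q·r_{q,i} for i = 1, 2, m₁·m₂ = [m₁·m₂]_t + t·r_t, and e₁'·e₂' = [e₁'·e₂']_Δ + Δ·r_Δ. Then, with r_r := (t/q)·[e₁'·e₂']_Δ − (r_t(q)/q)·(Δ·m₁·m₂ + m₁·e₂' + m₂·e₁' + r_Δ), the following exact identity holds in ℚ[x]/(xⁿ+1): (t/q)·F₁·F₂ = Δ·[m₁·m₂]_t + (m₁·e₂' + m₂·e₁') + (q − r_t(q))·(r_t + m₁·r_{q,2} + m₂·r_{q,1}) + t·(r_{q,1}·e₂' + r_{q,2}·e₁') + q·t·r_{q,1}·r_{q,2} + r_Δ + r_r. -/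
open Polynomial

/-- Coefficientwise symmetric reduction modulo `k`: every coefficient is replaced by
its representative in the symmetric interval `[-k/2, k/2)`.  This is `[f]_k`. -/
noncomputable def symRed (k : ℕ) (f : Polynomial ℤ) : Polynomial ℤ :=
  f.sum fun i a => Polynomial.C (Int.bmod a k) * Polynomial.X ^ i

/-- The inclusion `ℤ[x] → ℚ[x]`. -/
noncomputable def toQ : Polynomial ℤ →+* Polynomial ℚ :=
  Polynomial.mapRingHom (Int.castRingHom ℚ)

lemma toQ_C (a : ℤ) : toQ (Polynomial.C a) = Polynomial.C (a : ℚ) := by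
  simp [toQ]

lemma toQ_pow_X_add_one (n : ℕ) :
    toQ ((X : Polynomial ℤ) ^ n + 1) = (X : Polynomial ℚ) ^ n + 1 := by
  simp [toQ]

lemma aux_cancel {a : ℚ} (ha : a ≠ 0) {P D : Polynomial ℚ}
    (h : P ∣ Polynomial.C a * D) : P ∣ D := by
  obtain ⟨w, hw⟩ := h
  refine ⟨Polynomial.C a⁻¹ * w, ?_⟩
  have h2 := congrArg (fun z => Polynomial.C a⁻¹ * z) hw
  simp only [← mul_assoc, ← Polynomial.C_mul, inv_mul_cancel₀ ha, Polynomial.C_1,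
    one_mul] at h2
  rw [h2]
  ring

/-- BFV multiplication expansion identity in `ℚ[x]/(xⁿ+1)` (formalized as a
congruence of rational polynomials modulo `xⁿ+1`): writing `Δ = ⌊q/t⌋`,
`r_t(q) = q - t·Δ`, `Fᵢ = Δ·mᵢ + eᵢ' + q·r_{q,i}`, `m₁·m₂ = [m₁·m₂]_t + t·r_t` and
`e₁'·e₂' = [e₁'·e₂']_Δ + Δ·r_Δ` (products reduced modulo `xⁿ+1`), we have the exact
identity `(t/q)·F₁·F₂ = Δ·[m₁·m₂]_t + (m₁·e₂' + m₂·e₁')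
+ (q - r_t(q))·(r_t + m₁·r_{q,2} + m₂·r_{q,1}) + t·(r_{q,1}·e₂' + r_{q,2}·e₁')
+ q·t·r_{q,1}·r_{q,2} + r_Δ + r_r`. -/
theorem bfv_multiplication_expansion (n : ℕ) (hn : 1 ≤ n) (q t : ℕ) (ht : 2 ≤ t) (htq : t < q)
    (Δ rtq : ℕ) (hΔ : Δ = q / t) (hrtq : rtq = q - t * Δ)
    (F₁ F₂ m₁ m₂ e₁' e₂' r₁ r₂ rt rΔ M E : Polynomial ℤ)
    (hM : M = symRed t ((m₁ * m₂) %ₘ ((X : Polynomial ℤ) ^ n + 1)))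
    (hE : E = symRed Δ ((e₁' * e₂') %ₘ ((X : Polynomial ℤ) ^ n + 1)))
    (hF₁ : ((X : Polynomial ℤ) ^ n + 1) ∣
      (F₁ - (Polynomial.C (Δ : ℤ) * m₁ + e₁' + Polynomial.C (q : ℤ) * r₁)))
    (hF₂ : ((X : Polynomial ℤ) ^ n + 1) ∣
      (F₂ - (Polynomial.C (Δ : ℤ) * m₂ + e₂' + Polynomial.C (q : ℤ) * r₂)))
    (hmm : ((X : Polynomial ℤ) ^ n + 1) ∣ (m₁ * m₂ - (M + Polynomial.C (t : ℤ) * rt)))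
    (hee : ((X : Polynomial ℤ) ^ n + 1) ∣ (e₁' * e₂' - (E + Polynomial.C (Δ : ℤ) * rΔ)))
    (rr : Polynomial ℚ)
    (hrr : rr = Polynomial.C ((t : ℚ) / (q : ℚ)) * toQ E
      - Polynomial.C ((rtq : ℚ) / (q : ℚ)) *
        (Polynomial.C (Δ : ℚ) * (toQ m₁ * toQ m₂) + toQ m₁ * toQ e₂'
          + toQ m₂ * toQ e₁' + toQ rΔ)) :
    ((X : Polynomial ℚ) ^ n + 1) ∣
      (Polynomial.C ((t : ℚ) / (q : ℚ)) * (toQ F₁ * toQ F₂)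
        - (Polynomial.C (Δ : ℚ) * toQ M
          + (toQ m₁ * toQ e₂' + toQ m₂ * toQ e₁')
          + Polynomial.C ((q : ℚ) - (rtq : ℚ)) * (toQ rt + toQ m₁ * toQ r₂ + toQ m₂ * toQ r₁)
          + Polynomial.C (t : ℚ) * (toQ r₁ * toQ e₂' + toQ r₂ * toQ e₁')
          + Polynomial.C ((q : ℚ) * (t : ℚ)) * (toQ r₁ * toQ r₂)
          + toQ rΔ + rr)) := by

  have hq0 : (q : ℚ) ≠ 0 := Nat.cast_ne_zero.mpr (by omega)
  have hΔle : t * Δ ≤ q := by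
    rw [hΔ, mul_comm]; exact Nat.div_mul_le_self q t
  have hnat : t * Δ + rtq = q := by omega
  have hQ : (t : ℚ) * (Δ : ℚ) = (q : ℚ) - (rtq : ℚ) := by
    have : ((t * Δ + rtq : ℕ) : ℚ) = (q : ℚ) := by exact_mod_cast hnat
    push_cast at this
    linarith
  have hCt : Polynomial.C (q : ℚ) * Polynomial.C ((t : ℚ) / (q : ℚ))
      = Polynomial.C (t : ℚ) := by
    rw [← map_mul]; congr 1; field_simp
  have hCr : Polynomial.C (q : ℚ) * Polynomial.C ((rtq : ℚ) / (q : ℚ))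
      = Polynomial.C (rtq : ℚ) := by
    rw [← map_mul]; congr 1; field_simp
  have hCs : Polynomial.C (t : ℚ) * Polynomial.C (Δ : ℚ)
      = Polynomial.C (q : ℚ) - Polynomial.C (rtq : ℚ) := by
    rw [← map_mul, ← map_sub]; exact congrArg _ hQ
  -- map the hypotheses to ℚ[x]
  obtain ⟨c₁, h₁⟩ := map_dvd toQ hF₁
  obtain ⟨c₂, h₂⟩ := map_dvd toQ hF₂
  obtain ⟨cm, hm⟩ := map_dvd toQ hmm
  obtain ⟨ce, he⟩ := map_dvd toQ hee
  rw [toQ_pow_X_add_one] at h₁ h₂ hm he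
  simp only [map_sub, map_add, map_mul, toQ_C, Int.cast_natCast] at h₁ h₂ hm he
  have h₁' : toQ F₁ = Polynomial.C (Δ : ℚ) * toQ m₁ + toQ e₁' + Polynomial.C (q : ℚ) * toQ r₁
      + ((X : Polynomial ℚ) ^ n + 1) * c₁ := by linear_combination h₁
  have h₂' : toQ F₂ = Polynomial.C (Δ : ℚ) * toQ m₂ + toQ e₂' + Polynomial.C (q : ℚ) * toQ r₂
      + ((X : Polynomial ℚ) ^ n + 1) * c₂ := by linear_combination h₂
  have hm' : toQ m₁ * toQ m₂ = toQ M + Polynomial.C (t : ℚ) * toQ rt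
      + ((X : Polynomial ℚ) ^ n + 1) * cm := by linear_combination hm
  have he' : toQ e₁' * toQ e₂' = toQ E + Polynomial.C (Δ : ℚ) * toQ rΔ
      + ((X : Polynomial ℚ) ^ n + 1) * ce := by linear_combination he
  refine aux_cancel hq0 ?_
  rw [hrr,
    show (Polynomial.C ((q : ℚ) - (rtq : ℚ))) = Polynomial.C (q : ℚ) - Polynomial.C (rtq : ℚ)
      from map_sub _ _ _,
    show (Polynomial.C ((q : ℚ) * (t : ℚ))) = Polynomial.C (q : ℚ) * Polynomial.C (t : ℚ)
      from map_mul _ _ _]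
  refine ⟨Polynomial.C (t : ℚ) *
      (c₁ * (Polynomial.C (Δ : ℚ) * toQ m₂ + toQ e₂' + Polynomial.C (q : ℚ) * toQ r₂)
        + c₂ * (Polynomial.C (Δ : ℚ) * toQ m₁ + toQ e₁' + Polynomial.C (q : ℚ) * toQ r₁)
        + ((X : Polynomial ℚ) ^ n + 1) * c₁ * c₂)
    + Polynomial.C (q : ℚ) * Polynomial.C (Δ : ℚ) * cm + Polynomial.C (t : ℚ) * ce, ?_⟩
  linear_combination
    (Polynomial.C (t : ℚ) * toQ F₂) * h₁'
    + (Polynomial.C (t : ℚ) *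
        (Polynomial.C (Δ : ℚ) * toQ m₁ + toQ e₁' + Polynomial.C (q : ℚ) * toQ r₁
          + ((X : Polynomial ℚ) ^ n + 1) * c₁)) * h₂'
    + (Polynomial.C (q : ℚ) * Polynomial.C (Δ : ℚ)) * hm'
    + (Polynomial.C (t : ℚ)) * he'
    + (toQ F₁ * toQ F₂ - toQ E) * hCt
    + (Polynomial.C (Δ : ℚ) * (toQ m₁ * toQ m₂) + toQ m₁ * toQ e₂' + toQ m₂ * toQ e₁'
        + toQ rΔ) * hCr
    + (Polynomial.C (Δ : ℚ) * (toQ m₁ * toQ m₂) + Polynomial.C (q : ℚ) * toQ rt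
        + (toQ m₁ * toQ e₂' + toQ m₂ * toQ e₁')
        + Polynomial.C (q : ℚ) * (toQ m₁ * toQ r₂ + toQ m₂ * toQ r₁) + toQ rΔ) * hCs
end

section
/- Correctness of BFV relinearization (version 2): let q, p ≥ 2 be integers and work in ℚ[x]/(xⁿ+1). Let s, h₀, h₁, h₂, a, e, r_{pq} ∈ ℤ[x]/(xⁿ+1) and set b = −(a·s + e) + p·s² + p·q·r_{pq}. Define h₀' = h₀ + ⌊(h₂·b)/p⌉ and h₁' = h₁ + ⌊(h₂·a)/p⌉, where ⌊·⌉ rounds each coefficient to the nearest integer. Then the exact identity h₀' + h₁'·s = h₀ + h₁·s + h₂·s² + q·h₂·r_{pq} + err₂ holds in ℚ[x]/(xⁿ+1), where err₂ = −(h₂·e)/p + (⌊(h₂·b)/p⌉ − (h₂·b)/p) + (⌊(h₂·a)/p⌉ − (h₂·a)/p)·s; in particular h₀' + h₁'·s − (h₀ + h₁·s + h₂·s²) − err₂ is divisible by q. -/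
open Polynomial

/-- Coefficientwise rounding to the nearest integer, `⌊·⌉`. -/
noncomputable def roundPoly (f : Polynomial ℚ) : Polynomial ℚ :=
  f.sum fun i a => Polynomial.C ((round a : ℤ) : ℚ) * Polynomial.X ^ i

/-! Modulo `xⁿ + 1` the reductions `%ₘ` disappear and the rounded terms occur on both sides and
cancel, so the claim becomes `(1/p)·h₂·b + (1/p)·h₂·a·s = h₂·s² + q·h₂·r - (1/p)·h₂·e` in
`ℚ[x]/(xⁿ + 1)`, which follows by substituting the relation defining the key `b`. -/

theorem AdjoinRoot.mk_modByMonic {R : Type*} [CommRing R] (f g : R[X]) :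
    AdjoinRoot.mk f (g %ₘ f) = AdjoinRoot.mk f g :=
  AdjoinRoot.mk_eq_mk.mpr (dvd_modByMonic_sub g f)

theorem relinearization_identity {R : Type*} [CommRing R] {c P Q a b e s h r : R}
    (hc : c * P = 1) (hb : b = -(a * s + e) + P * s ^ 2 + P * Q * r) :
    c * (h * b) + c * (h * a) * s = h * s ^ 2 + Q * (h * r) - c * (h * e) := by
  subst hb
  linear_combination (h * s ^ 2 + Q * (h * r)) * hc

theorem bfv_relinearization_v2_correct_general (n : ℕ) (q p : ℕ)
    (hp : 2 ≤ p)
    (s h₀ h₁ h₂ a e rpq b : Polynomial ℤ)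
    (hb : ((X : Polynomial ℤ) ^ n + 1) ∣
      (b - (-(a * s + e) + Polynomial.C (p : ℤ) * s ^ 2
        + Polynomial.C ((p : ℤ) * (q : ℤ)) * rpq)))
    (Hb Ha : Polynomial ℚ)
    (hHb : Hb = Polynomial.C ((1 : ℚ) / (p : ℚ)) *
      ((toQ h₂ * toQ b) %ₘ ((X : Polynomial ℚ) ^ n + 1)))
    (hHa : Ha = Polynomial.C ((1 : ℚ) / (p : ℚ)) *
      ((toQ h₂ * toQ a) %ₘ ((X : Polynomial ℚ) ^ n + 1)))
    (h₀' h₁' err₂ : Polynomial ℚ)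
    (hh₀' : h₀' = toQ h₀ + roundPoly Hb)
    (hh₁' : h₁' = toQ h₁ + roundPoly Ha)
    (herr : err₂ = -(Polynomial.C ((1 : ℚ) / (p : ℚ)) * (toQ h₂ * toQ e))
      + (roundPoly Hb - Hb) + (roundPoly Ha - Ha) * toQ s) :
    ((X : Polynomial ℚ) ^ n + 1) ∣
      (h₀' + h₁' * toQ s
        - (toQ h₀ + toQ h₁ * toQ s + toQ h₂ * toQ s ^ 2
          + Polynomial.C (q : ℚ) * (toQ h₂ * toQ rpq) + err₂)) := by
  subst hh₀' hh₁' herr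
  set D : ℚ[X] := X ^ n + 1
  let ψ : ℤ[X] →+* AdjoinRoot D := (AdjoinRoot.mk D).comp toQ
  have hψD : ψ (X ^ n + 1) = 0 := by
    have hD : toQ (X ^ n + 1) = D := by simp [toQ, D]
    rw [RingHom.comp_apply, hD, AdjoinRoot.mk_self]
  have hψb : ψ b = -(ψ a * ψ s + ψ e) + p * ψ s ^ 2 + p * q * ψ rpq := by
    have := map_dvd ψ hb
    rw [hψD, zero_dvd_iff, map_sub, sub_eq_zero] at this
    simpa [ψ, toQ] using this
  have hc : (AdjoinRoot.of D ((1 : ℚ) / p)) * p = 1 := by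
    rw [← map_natCast (AdjoinRoot.of D), ← map_mul, one_div_mul_cancel (by positivity), map_one]
  rw [← AdjoinRoot.mk_eq_mk, hHb, hHa]
  have hkey := relinearization_identity (h := ψ h₂) hc hψb
  simp only [map_add, map_sub, map_mul, map_neg, map_pow, AdjoinRoot.mk_modByMonic,
    AdjoinRoot.mk_C, map_natCast] at hkey ⊢
  simp only [ψ, RingHom.comp_apply] at hkey
  linear_combination hkey

/-- Correctness of BFV relinearization (version 2), as an exact identity in
`ℚ[x]/(xⁿ+1)` (formalized as a congruence of rational polynomials modulo `xⁿ+1`):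
with relinearization key `b = -(a·s + e) + p·s² + p·q·r_{pq}` (an identity in
`ℤ[x]/(xⁿ+1)`), `h₀' = h₀ + ⌊(h₂·b)/p⌉` and `h₁' = h₁ + ⌊(h₂·a)/p⌉` (products
reduced modulo `xⁿ+1`, rounding coefficientwise), we have
`h₀' + h₁'·s = h₀ + h₁·s + h₂·s² + q·h₂·r_{pq} + err₂`, where
`err₂ = -(h₂·e)/p + (⌊(h₂·b)/p⌉ - (h₂·b)/p) + (⌊(h₂·a)/p⌉ - (h₂·a)/p)·s`. -/
theorem bfv_relinearization_v2_correct (n : ℕ) (hn : 1 ≤ n) (q p : ℕ)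
    (hq : 2 ≤ q) (hp : 2 ≤ p)
    (s h₀ h₁ h₂ a e rpq b : Polynomial ℤ)
    (hb : ((X : Polynomial ℤ) ^ n + 1) ∣
      (b - (-(a * s + e) + Polynomial.C (p : ℤ) * s ^ 2
        + Polynomial.C ((p : ℤ) * (q : ℤ)) * rpq)))
    (Hb Ha : Polynomial ℚ)
    (hHb : Hb = Polynomial.C ((1 : ℚ) / (p : ℚ)) *
      ((toQ h₂ * toQ b) %ₘ ((X : Polynomial ℚ) ^ n + 1)))
    (hHa : Ha = Polynomial.C ((1 : ℚ) / (p : ℚ)) *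
      ((toQ h₂ * toQ a) %ₘ ((X : Polynomial ℚ) ^ n + 1)))
    (h₀' h₁' err₂ : Polynomial ℚ)
    (hh₀' : h₀' = toQ h₀ + roundPoly Hb)
    (hh₁' : h₁' = toQ h₁ + roundPoly Ha)
    (herr : err₂ = -(Polynomial.C ((1 : ℚ) / (p : ℚ)) * (toQ h₂ * toQ e))
      + (roundPoly Hb - Hb) + (roundPoly Ha - Ha) * toQ s) :
    ((X : Polynomial ℚ) ^ n + 1) ∣
      (h₀' + h₁' * toQ s
        - (toQ h₀ + toQ h₁ * toQ s + toQ h₂ * toQ s ^ 2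
          + Polynomial.C (q : ℚ) * (toQ h₂ * toQ rpq) + err₂)) :=
  bfv_relinearization_v2_correct_general n q p hp s h₀ h₁ h₂ a e rpq b hb Hb Ha hHb hHa h₀' h₁' err₂
    hh₀' hh₁' herr
end
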